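/- Let x ∈ E^N have pairwise distinct entries, and let Q = Σ_{p=0}^{q} u_p Σ_{a∈[N]^[q]_p} δ_{x^a} be a signed measure on E^q, where [N]^[q]_p is the set of maps [q]→[N] with image of cardinality p and u_p ∈ ℝ. Then ‖Q‖_tv = Σ_{p=0}^{q} |u_p| · (N)_p · S(q,p), where S(q,p) is the Stirling number of the second kind. -/

import Mathlib

/-!
The points `x ∘ a` are pairwise distinct, so `Q = Σ_a u_{#im a} δ_{x ∘ a}` is a finite combination
of Dirac masses at distinct points. Splitting the coefficients by sign gives two mutually singular
measures, which by uniqueness form the Jordan decomposition of `Q`; hence `‖Q‖_tv = Σ_a |u_{#im a}|`.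
It remains to count the maps `a : [q] → [N]` with `p` values: adjoining a new coordinate either
keeps the image (`p` choices) or enlarges it (`N - p` choices), which is the Stirling recursion
multiplied by `(N)_{p+1} = (N - p) (N)_p`.
-/

open MeasureTheory
open scoped ENNReal NNReal

/-- Stirling numbers of the second kind. -/
def stirlingSnd : ℕ → ℕ → ℕ
  | 0, 0 => 1
  | 0, _ + 1 => 0
  | _ + 1, 0 => 0
  | n + 1, k + 1 => (k + 1) * stirlingSnd n (k + 1) + stirlingSnd n k

theorem stirlingSnd_eq_stirlingSecond : stirlingSnd = Nat.stirlingSecond := by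
  funext n k
  induction n generalizing k with
  | zero => cases k <;> rfl
  | succ n ih => cases k <;> simp [stirlingSnd, Nat.stirlingSecond, ih]

namespace MeasureTheory

variable {α : Type*} [MeasurableSpace α]

theorem SignedMeasure.totalVariation_toSignedMeasure_sub {μ ν : Measure α} [IsFiniteMeasure μ]
    [IsFiniteMeasure ν] (h : μ ⟂ₘ ν) :
    (μ.toSignedMeasure - ν.toSignedMeasure).totalVariation = μ + ν := by
  have hj := JordanDecomposition.toJordanDecomposition_toSignedMeasure ⟨μ, ν, h⟩
  rw [SignedMeasure.totalVariation, JordanDecomposition.toSignedMeasure] at *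
  rw [hj]

theorem Measure.toSignedMeasure_finset_sum {ι : Type*} (s : Finset ι) (μ : ι → Measure α)
    [∀ i, IsFiniteMeasure (μ i)] :
    (∑ i ∈ s, μ i).toSignedMeasure = ∑ i ∈ s, (μ i).toSignedMeasure := by
  classical
  induction s using Finset.induction_on with
  | empty => simp
  | insert i s hi ih => simp only [Finset.sum_insert hi, Measure.toSignedMeasure_add, ih]

theorem Measure.smul_toSignedMeasure_eq_sub (c : ℝ) (μ : Measure α) [IsFiniteMeasure μ] :
    c • μ.toSignedMeasure =
      (c.toNNReal • μ).toSignedMeasure - ((-c).toNNReal • μ).toSignedMeasure := by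
  rw [Measure.toSignedMeasure_smul, Measure.toSignedMeasure_smul, NNReal.smul_def,
    NNReal.smul_def, Real.coe_toNNReal', Real.coe_toNNReal']
  conv_lhs => rw [← max_zero_sub_max_neg_zero_eq_self c]
  exact sub_smul (M := SignedMeasure α) _ _ _

theorem Measure.toNNReal_smul_add_toNNReal_neg_smul (c : ℝ) (μ : Measure α) :
    c.toNNReal • μ + (-c).toNNReal • μ = ENNReal.ofReal |c| • μ := by
  rw [← add_smul]
  rcases le_total 0 c with hc | hc
  · simp [Real.toNNReal_eq_zero.2 (neg_nonpos.2 hc), abs_of_nonneg hc, ENNReal.ofReal]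
  · simp [Real.toNNReal_eq_zero.2 hc, abs_of_nonpos hc, ENNReal.ofReal]

variable [MeasurableSingletonClass α]

theorem Measure.dirac_mutuallySingular_dirac {a b : α} (h : a ≠ b) :
    Measure.dirac a ⟂ₘ Measure.dirac b :=
  ⟨{a}ᶜ, (MeasurableSet.singleton a).compl, by simp, by simp [h.symm]⟩

theorem Measure.mutuallySingular_sum_smul_dirac {ι : Type*} [Fintype ι] {y : ι → α}
    (hy : Function.Injective y) (c : ι → ℝ) :
    (∑ i, (c i).toNNReal • Measure.dirac (y i)) ⟂ₘ
      ∑ i, (-c i).toNNReal • Measure.dirac (y i) := by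
  rw [← Measure.sum_fintype, ← Measure.sum_fintype, Measure.MutuallySingular.sum_left]
  intro i
  rw [Measure.MutuallySingular.sum_right]
  intro j
  obtain rfl | hij := eq_or_ne i j
  · rcases le_total 0 (c i) with hc | hc
    · simp [Real.toNNReal_eq_zero.2 (neg_nonpos.2 hc)]
    · simp [Real.toNNReal_eq_zero.2 hc]
  · exact (((Measure.dirac_mutuallySingular_dirac (hy.ne hij)).smul_nnreal _).symm.smul_nnreal
      _).symm

theorem SignedMeasure.totalVariation_sum_smul_dirac {ι : Type*} [Fintype ι] {y : ι → α}
    (hy : Function.Injective y) (c : ι → ℝ) :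
    (∑ i, c i • (Measure.dirac (y i)).toSignedMeasure).totalVariation =
      ∑ i, ENNReal.ofReal |c i| • Measure.dirac (y i) := by
  simp only [Measure.smul_toSignedMeasure_eq_sub, Finset.sum_sub_distrib,
    ← Measure.toSignedMeasure_finset_sum]
  rw [totalVariation_toSignedMeasure_sub (Measure.mutuallySingular_sum_smul_dirac hy c),
    ← Finset.sum_add_distrib]
  simp only [Measure.toNNReal_smul_add_toNNReal_neg_smul]

end MeasureTheory

open Finset

section ImageCard

variable {β : Type*} [DecidableEq β]

theorem Fin.image_univ_cons {q : ℕ} (y : β) (b : Fin q → β) :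
    univ.image (Fin.cons y b : Fin (q + 1) → β) = insert y (univ.image b) := by
  apply coe_injective
  simp [Fin.range_cons]

variable [Fintype β]

theorem sum_range_sum_filter_card_image {M : Type*} [AddCommMonoid M] (q : ℕ)
    (g : ℕ → (Fin q → β) → M) :
    ∑ p ∈ range (q + 1), ∑ a with #(univ.image a) = p, g p a = ∑ a, g #(univ.image a) a := by
  have hmaps : ∀ a ∈ (univ : Finset (Fin q → β)), #(univ.image a) ∈ range (q + 1) :=
    fun a _ => mem_range.2 (Nat.lt_succ_of_le (card_image_le.trans (card_fin q).le))
  rw [← sum_fiberwise_of_maps_to hmaps]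
  exact sum_congr rfl fun p _ => sum_congr rfl fun a ha => by rw [(mem_filter.1 ha).2]

theorem card_filter_card_insert_eq (S : Finset β) (k : ℕ) :
    #{y | #(insert y S) = k} =
      (if #S = k then #S else 0) + (if #S + 1 = k then Fintype.card β - #S else 0) := by
  have hin : ∀ y ∈ S, #(insert y S) = #S := fun y hy => by rw [insert_eq_of_mem hy]
  have hout : ∀ y ∉ S, #(insert y S) = #S + 1 := fun y hy => card_insert_of_notMem hy
  rw [← card_filter_add_card_filter_not (s := {y | #(insert y S) = k}) (· ∈ S),
    filter_filter, filter_filter]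
  congr 1
  · split_ifs with h
    · congr 1; ext y; simp +contextual [h]
    · simpa using fun y hk hy => h (hin y hy ▸ hk)
  · split_ifs with h
    · rw [← card_compl]; congr 1; ext y; simp +contextual [hout, h]
    · simpa using fun y hk => by_contra fun hy => h (hout y hy ▸ hk)

theorem card_filter_card_image_eq (q p : ℕ) :
    #{a : Fin q → β | #(univ.image a) = p} =
      q.stirlingSecond p * (Fintype.card β).descFactorial p := by
  induction q generalizing p with
  | zero => cases p <;> simp
  | succ q ih =>
    cases p with
    | zero => simp [univ_nonempty.ne_empty]
    | succ p =>
    have hcons : #{a : Fin (q + 1) → β | #(univ.image a) = p + 1} =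
        ∑ b : Fin q → β, #{y | #(insert y (univ.image b)) = p + 1} := by
      simp only [card_filter, ← Fin.image_univ_cons]
      rw [← (Fin.consEquiv fun _ => β).sum_comp, Fintype.sum_prod_type_right]
      rfl
    simp only [hcons, card_filter_card_insert_eq, sum_add_distrib, ← sum_filter,
      Nat.add_right_cancel_iff]
    rw [sum_const_nat fun a ha => (mem_filter.1 ha).2,
      sum_const_nat fun a ha => by rw [(mem_filter.1 ha).2], ih, ih,
      Nat.stirlingSecond_succ_succ, Nat.descFactorial_succ]
    ring

end ImageCard

theorem stmt_10_general {E : Type*} [MeasurableSpace E] [MeasurableSingletonClass E]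
    (N q : ℕ) (x : Fin N → E) (hx : Function.Injective x)
    (u : ℕ → ℝ) :
    (∑ p ∈ Finset.range (q + 1),
        u p •
          ∑ a ∈ Finset.univ.filter
              (fun a : Fin q → Fin N => (Finset.univ.image a).card = p),
            (Measure.dirac (fun i => x (a i))).toSignedMeasure).totalVariation Set.univ =
      ENNReal.ofReal
        (∑ p ∈ Finset.range (q + 1),
          |u p| * (N.descFactorial p : ℝ) * (stirlingSnd q p : ℝ)) := by
  have hcount : ∀ p, |u p| * (N.descFactorial p : ℝ) * (stirlingSnd q p : ℝ) =
      ∑ a : Fin q → Fin N with #(univ.image a) = p, |u p| := by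
    intro p
    rw [sum_const, card_filter_card_image_eq, Fintype.card_fin, stirlingSnd_eq_stirlingSecond,
      nsmul_eq_mul]
    push_cast
    ring
  simp only [smul_sum, hcount]
  rw [sum_range_sum_filter_card_image q
      (fun p a => u p • (Measure.dirac fun i => x (a i)).toSignedMeasure),
    sum_range_sum_filter_card_image q (fun p _ => |u p|),
    SignedMeasure.totalVariation_sum_smul_dirac (y := fun a i => x (a i)) hx.comp_left
      fun a => u #(univ.image a),
    ENNReal.ofReal_sum_of_nonneg fun a _ => abs_nonneg _]
  simp [Measure.finsetSum_apply]

/-- For `x ∈ E^N` with pairwise distinct entries, the signed measure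
`Q = Σ_{p=0}^{q} u_p Σ_{a ∈ [N]^[q]_p} δ_{x^a}` on `E^q` has total variation norm
`Σ_{p=0}^{q} |u_p| · (N)_p · S(q,p)`. -/
theorem stmt_10 {E : Type*} [MeasurableSpace E] [MeasurableSingletonClass E]
    (N q : ℕ) (hq : 1 ≤ q) (hqN : q ≤ N) (x : Fin N → E) (hx : Function.Injective x)
    (u : ℕ → ℝ) :
    (∑ p ∈ Finset.range (q + 1),
        u p •
          ∑ a ∈ Finset.univ.filter
              (fun a : Fin q → Fin N => (Finset.univ.image a).card = p),
            (Measure.dirac (fun i => x (a i))).toSignedMeasure).totalVariation Set.univ =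
      ENNReal.ofReal
        (∑ p ∈ Finset.range (q + 1),
          |u p| * (N.descFactorial p : ℝ) * (stirlingSnd q p : ℝ)) :=
  stmt_10_general N q x hx u
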